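/- arXiv:1706.10260 — 7 statements merged into one kernel-verified Lean document; each statement's English description precedes it below -/
import Mathlib

section
/- For probability measures P, Q on a measurable space with R(Q||P) < ∞, and a measurable function f whose moment generating function M_P(c; f̃) = E_P[exp(c(f - E_P f))] is finite in a neighborhood of 0, the bias satisfies E_Q[f] - E_P[f] ≤ inf_{c>0} { (1/c) log E_P[exp(c(f - E_P f))] + (1/c) R(Q||P) }. -/
open MeasureTheory ProbabilityTheory Real

/-- Kullback-Leibler divergence R(Q||P) = ∫ log(dQ/dP) dQ (as a real number). -/
noncomputable def klDiv {α : Type*} [MeasurableSpace α] (Q P : Measure α) : ℝ :=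
  ∫ x, Real.log ((Q.rnDeriv P x).toReal) ∂Q

/-!
The bias bound is the Donsker–Varadhan (Gibbs variational) inequality
`∫ g dQ ≤ log ∫ exp g dP + R(Q‖P)` applied to `g = c (f - E_P f)` and divided by `c > 0`.
The inequality itself is Gibbs' inequality `R(Q‖P_g) ≥ 0` for the tilted measure
`dP_g ∝ exp g dP`, whose divergence from `Q` is `R(Q‖P) - ∫ g dQ + log ∫ exp g dP`.
-/

section DonskerVaradhan

variable {α : Type*} [MeasurableSpace α] {μ ν : Measure α}
  [IsProbabilityMeasure μ] [IsProbabilityMeasure ν] {g : α → ℝ}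

lemma integral_le_log_integral_exp_add_integral_llr (hμν : μ ≪ ν)
    (h_llr : Integrable (llr μ ν) μ) (hgμ : Integrable g μ)
    (hgν : Integrable (fun x ↦ exp (g x)) ν) :
    ∫ x, g x ∂μ ≤ log (∫ x, exp (g x) ∂ν) + ∫ x, llr μ ν x ∂μ := by
  have := isProbabilityMeasure_tilted hgν
  have h_ac : μ ≪ ν.tilted g := hμν.trans (absolutelyContinuous_tilted hgν)
  have h_gibbs := InformationTheory.integral_llr_add_sub_measure_univ_nonneg h_ac
    (integrable_llr_tilted_right hμν hgμ h_llr hgν)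
  rw [integral_llr_tilted_right hμν hgμ hgν h_llr] at h_gibbs
  simp only [probReal_univ] at h_gibbs
  linarith

end DonskerVaradhan

lemma integral_sub_le_log_integral_exp_div_add_klDiv_div {α : Type*} [MeasurableSpace α]
    {P Q : Measure α} [IsProbabilityMeasure P] [IsProbabilityMeasure Q] (hac : Q ≪ P)
    (hKL : Integrable (llr Q P) Q) {f : α → ℝ} (hfQ : Integrable f Q) (m : ℝ) {c : ℝ}
    (hc : 0 < c) (hexp : Integrable (fun x ↦ exp (c * (f x - m))) P) :
    (∫ x, f x ∂Q) - m ≤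
      1 / c * log (∫ x, exp (c * (f x - m)) ∂P) + 1 / c * klDiv Q P := by
  have h_dv := integral_le_log_integral_exp_add_integral_llr (g := fun x ↦ c * (f x - m)) hac hKL
    ((hfQ.sub (integrable_const m)).const_mul c) hexp
  rw [integral_const_mul, integral_sub hfQ (integrable_const m), integral_const,
    probReal_univ, one_smul] at h_dv
  rw [← mul_add, one_div, ← div_eq_inv_mul, le_div_iff₀ hc, mul_comm]
  exact h_dv

theorem bias_le_goal_oriented_divergence_general
    {α : Type*} [MeasurableSpace α] (P Q : Measure α)
    [IsProbabilityMeasure P] [IsProbabilityMeasure Q]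
    (hac : Q ≪ P)
    (hKL : Integrable (fun x => Real.log ((Q.rnDeriv P x).toReal)) Q)
    (f : α → ℝ)
    (hfQ : Integrable f Q)
    (hmgf : ∃ δ > (0:ℝ), ∀ c : ℝ, |c| < δ →
      Integrable (fun x => Real.exp (c * (f x - ∫ y, f y ∂P))) P) :
    (∫ x, f x ∂Q) - (∫ x, f x ∂P) ≤
      sInf {y : ℝ | ∃ c : ℝ, 0 < c ∧
        Integrable (fun x => Real.exp (c * (f x - ∫ y, f y ∂P))) P ∧
        y = (1/c) * Real.log (∫ x, Real.exp (c * (f x - ∫ y, f y ∂P)) ∂P)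
            + (1/c) * klDiv Q P} := by
  apply le_csInf
  · obtain ⟨δ, hδ, h_int⟩ := hmgf
    refine ⟨_, δ / 2, half_pos hδ, h_int (δ / 2) ?_, rfl⟩
    rw [abs_of_pos (half_pos hδ)]
    exact half_lt_self hδ
  · rintro y ⟨c, hc, hexp, rfl⟩
    exact integral_sub_le_log_integral_exp_div_add_klDiv_div hac hKL hfQ _ hc hexp

/-- upper GO-divergence bound on the model bias. -/
theorem bias_le_goal_oriented_divergence
    {α : Type*} [MeasurableSpace α] (P Q : Measure α)
    [IsProbabilityMeasure P] [IsProbabilityMeasure Q]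
    (hac : Q ≪ P)
    (hKL : Integrable (fun x => Real.log ((Q.rnDeriv P x).toReal)) Q)
    (f : α → ℝ) (hf : Measurable f)
    (hfP : Integrable f P) (hfQ : Integrable f Q)
    (hmgf : ∃ δ > (0:ℝ), ∀ c : ℝ, |c| < δ →
      Integrable (fun x => Real.exp (c * (f x - ∫ y, f y ∂P))) P) :
    (∫ x, f x ∂Q) - (∫ x, f x ∂P) ≤
      sInf {y : ℝ | ∃ c : ℝ, 0 < c ∧
        Integrable (fun x => Real.exp (c * (f x - ∫ y, f y ∂P))) P ∧
        y = (1/c) * Real.log (∫ x, Real.exp (c * (f x - ∫ y, f y ∂P)) ∂P)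
            + (1/c) * klDiv Q P} :=
  bias_le_goal_oriented_divergence_general P Q hac hKL f hfQ hmgf
end

section
/- Under the same hypotheses, the bias is bounded below: E_Q[f] - E_P[f] ≥ - inf_{c>0} { (1/c) log E_P[exp(-c(f - E_P f))] + (1/c) R(Q||P) }, i.e., -Ξ(Q||P; -f) ≤ E_Q[f] - E_P[f]. -/
open MeasureTheory ProbabilityTheory Real

/-!
The Donsker–Varadhan (Gibbs variational) inequality
`∫ g dQ ≤ log ∫ exp g dP + R(Q‖P)` is Gibbs' inequality `R(Q‖P_g) ≥ 0` for the tilted measure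
`dP_g ∝ exp g dP`. Applied to `g = -c (f - E_P f)` and divided by `c > 0`, it bounds
`-(E_Q f - E_P f)` by every element of the set whose infimum defines `Ξ(Q‖P; -f)`; that set is
nonempty because the moment generating function is finite near `0`.
-/

lemma klDiv_eq_integral_llr {α : Type*} [MeasurableSpace α] (Q P : Measure α) :
    klDiv Q P = ∫ x, llr Q P x ∂Q := rfl

lemma integral_le_log_integral_exp_add_klDiv {α : Type*} [MeasurableSpace α]
    {P Q : Measure α} [SigmaFinite P] [IsProbabilityMeasure Q] (hac : Q ≪ P)
    (hKL : Integrable (llr Q P) Q) {g : α → ℝ} (hgQ : Integrable g Q)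
    (hexp : Integrable (fun x ↦ exp (g x)) P) :
    ∫ x, g x ∂Q ≤ log (∫ x, exp (g x) ∂P) + klDiv Q P := by
  have : NeZero P := ⟨fun hP ↦ IsProbabilityMeasure.ne_zero Q (by simpa [hP] using hac)⟩
  have : IsProbabilityMeasure (P.tilted g) := isProbabilityMeasure_tilted hexp
  have hac_tilted : Q ≪ P.tilted g := hac.trans (absolutelyContinuous_tilted hexp)
  have gibbs := InformationTheory.integral_llr_add_sub_measure_univ_nonneg hac_tilted
    (integrable_llr_tilted_right hac hgQ hKL hexp)
  rw [integral_llr_tilted_right hac hgQ hexp hKL] at gibbs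
  simp only [probReal_univ, add_sub_cancel_right] at gibbs
  rw [klDiv_eq_integral_llr]
  linarith

lemma neg_integral_le_inv_mul_log_integral_exp_add {α : Type*} [MeasurableSpace α]
    {P Q : Measure α} [SigmaFinite P] [IsProbabilityMeasure Q] (hac : Q ≪ P)
    (hKL : Integrable (llr Q P) Q) {g : α → ℝ} (hgQ : Integrable g Q) {c : ℝ} (hc : 0 < c)
    (hexp : Integrable (fun x ↦ exp (-c * g x)) P) :
    -∫ x, g x ∂Q ≤ (1 / c) * log (∫ x, exp (-c * g x) ∂P) + (1 / c) * klDiv Q P := by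
  have hDV := integral_le_log_integral_exp_add_klDiv hac hKL (hgQ.const_mul (-c)) hexp
  rw [integral_const_mul] at hDV
  calc -∫ x, g x ∂Q = (1 / c) * (-c * ∫ x, g x ∂Q) := by field_simp
    _ ≤ (1 / c) * (log (∫ x, exp (-c * g x) ∂P) + klDiv Q P) := by gcongr
    _ = _ := mul_add _ _ _

theorem bias_ge_neg_goal_oriented_divergence_general
    {α : Type*} [MeasurableSpace α] (P Q : Measure α)
    [IsProbabilityMeasure P] [IsProbabilityMeasure Q]
    (hac : Q ≪ P)
    (hKL : Integrable (fun x => Real.log ((Q.rnDeriv P x).toReal)) Q)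
    (f : α → ℝ)
    (hfQ : Integrable f Q)
    (hmgf : ∃ δ > (0:ℝ), ∀ c : ℝ, |c| < δ →
      Integrable (fun x => Real.exp (c * (f x - ∫ y, f y ∂P))) P) :
    - sInf {y : ℝ | ∃ c : ℝ, 0 < c ∧
        Integrable (fun x => Real.exp (-c * (f x - ∫ y, f y ∂P))) P ∧
        y = (1/c) * Real.log (∫ x, Real.exp (-c * (f x - ∫ y, f y ∂P)) ∂P)
            + (1/c) * klDiv Q P} ≤
      (∫ x, f x ∂Q) - (∫ x, f x ∂P) := by
  obtain ⟨δ, hδ, hδint⟩ := hmgf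
  have hbias : ∫ x, (f x - ∫ y, f y ∂P) ∂Q = ∫ x, f x ∂Q - ∫ x, f x ∂P := by
    simp [integral_sub hfQ (integrable_const _)]
  rw [neg_le, ← hbias]
  refine le_csInf ⟨_, δ / 2, half_pos hδ,
    hδint _ (by rw [abs_neg, abs_of_pos (half_pos hδ)]; exact half_lt_self hδ), rfl⟩ ?_
  rintro y ⟨c, hc, hexp, rfl⟩
  exact neg_integral_le_inv_mul_log_integral_exp_add hac hKL (hfQ.sub (integrable_const _)) hc hexp

/-- lower GO-divergence bound on the model bias. -/
theorem bias_ge_neg_goal_oriented_divergence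
    {α : Type*} [MeasurableSpace α] (P Q : Measure α)
    [IsProbabilityMeasure P] [IsProbabilityMeasure Q]
    (hac : Q ≪ P)
    (hKL : Integrable (fun x => Real.log ((Q.rnDeriv P x).toReal)) Q)
    (f : α → ℝ) (hf : Measurable f)
    (hfP : Integrable f P) (hfQ : Integrable f Q)
    (hmgf : ∃ δ > (0:ℝ), ∀ c : ℝ, |c| < δ →
      Integrable (fun x => Real.exp (c * (f x - ∫ y, f y ∂P))) P) :
    - sInf {y : ℝ | ∃ c : ℝ, 0 < c ∧
        Integrable (fun x => Real.exp (-c * (f x - ∫ y, f y ∂P))) P ∧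
        y = (1/c) * Real.log (∫ x, Real.exp (-c * (f x - ∫ y, f y ∂P)) ∂P)
            + (1/c) * klDiv Q P} ≤
      (∫ x, f x ∂Q) - (∫ x, f x ∂P) :=
  bias_ge_neg_goal_oriented_divergence_general P Q hac hKL f hfQ hmgf
end

section
/- (Hoeffding concentration/information bound) If a ≤ f(X) ≤ b P-almost surely, then for every probability measure Q with R(Q||P) ≤ η², |E_Q[f] - E_P[f]| ≤ ((b-a)/2)·√2·η. -/
open MeasureTheory ProbabilityTheory Real


lemma pinsker_G_mono : MonotoneOn (fun y : ℝ => (y + 1) * Real.log y - 2 * (y - 1)) (Set.Ioi 0) := by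
  apply monotoneOn_of_hasDerivWithinAt_nonneg (convex_Ioi 0)
    (f' := fun y => Real.log y + (y + 1) * y⁻¹ - 2)
  · intro y hy
    exact ((((hasDerivAt_id' (x:=y)).add_const 1).mul (Real.hasDerivAt_log (ne_of_gt hy))).sub
      (((hasDerivAt_id' (x:=y)).sub_const 1).const_mul 2)).continuousAt.continuousWithinAt
  · intro y hy
    rw [interior_Ioi] at hy
    exact ((((hasDerivAt_id' (x:=y)).add_const 1).mul (Real.hasDerivAt_log (ne_of_gt hy))).sub
      (((hasDerivAt_id' (x:=y)).sub_const 1).const_mul 2)).congr_deriv (by ring) |>.hasDerivWithinAt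
  · intro y hy
    rw [interior_Ioi] at hy
    have hy0 : (0:ℝ) < y := hy
    have h1 : 1 - y⁻¹ ≤ Real.log y := Real.one_sub_inv_le_log_of_pos hy0
    have h2 : (y + 1) * y⁻¹ = 1 + y⁻¹ := by field_simp
    rw [h2]; linarith

lemma pinsker_pointwise {x : ℝ} (hx : 0 ≤ x) :
    3 * (x - 1)^2 ≤ (2 * x + 4) * (x * Real.log x - x + 1) := by
  set D : ℝ → ℝ := fun y => (2 * y + 4) * (y * Real.log y - y + 1) - 3 * (y - 1)^2 with hD
  have hDcont : Continuous D := by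
    exact (((continuous_const.mul continuous_id).add continuous_const).mul
      ((Real.continuous_mul_log.sub continuous_id).add continuous_const)).sub
      (continuous_const.mul ((continuous_id.sub continuous_const).pow 2))
  have hD1 : D 1 = 0 := by simp [hD]
  have hDderiv : ∀ y : ℝ, 0 < y → HasDerivAt D
      (4 * ((y + 1) * Real.log y - 2 * (y - 1))) y := by
    intro y hy
    have h1 : HasDerivAt (fun z : ℝ => (2 * z + 4) * (z * Real.log z - z + 1))
        (2 * (y * Real.log y - y + 1) + (2 * y + 4) * (Real.log y + 1 - 1)) y := by
      exact ((((hasDerivAt_id' (x:=y)).const_mul 2).add_const 4).mul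
        (((Real.hasDerivAt_mul_log (ne_of_gt hy)).sub (hasDerivAt_id' (x:=y))).add_const 1)).congr_deriv (by simp only [Pi.sub_apply]; ring)
    have h2 : HasDerivAt (fun z : ℝ => 3 * (z - 1)^2) (3 * (2 * (y - 1))) y := by
      have := (((hasDerivAt_id' (x:=y)).sub_const 1).pow 2).const_mul 3
      simpa using this
    exact (h1.sub h2).congr_deriv (by ring)
  have hG1 : ((1:ℝ) + 1) * Real.log 1 - 2 * ((1:ℝ) - 1) = 0 := by simp
  rcases le_or_gt 1 x with hx1 | hx1
  · have hmono : MonotoneOn D (Set.Ici 1) := by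
      apply monotoneOn_of_hasDerivWithinAt_nonneg (convex_Ici 1) hDcont.continuousOn
        (f' := fun y => 4 * ((y + 1) * Real.log y - 2 * (y - 1)))
      · intro y hy
        rw [interior_Ici] at hy
        exact (hDderiv y (lt_trans one_pos hy)).hasDerivWithinAt
      · intro y hy
        rw [interior_Ici] at hy
        have : (0:ℝ) ≤ (y + 1) * Real.log y - 2 * (y - 1) := by
          have := pinsker_G_mono (Set.mem_Ioi.mpr one_pos) (Set.mem_Ioi.mpr (lt_trans one_pos hy)) hy.le
          simpa [hG1] using this
        linarith
    have := hmono (Set.self_mem_Ici) (Set.mem_Ici.mpr hx1) hx1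
    rw [hD1] at this
    simpa [hD, sub_nonneg] using this
  · have hanti : AntitoneOn D (Set.Icc 0 1) := by
      apply antitoneOn_of_hasDerivWithinAt_nonpos (convex_Icc 0 1) hDcont.continuousOn
        (f' := fun y => 4 * ((y + 1) * Real.log y - 2 * (y - 1)))
      · intro y hy
        rw [interior_Icc] at hy
        exact (hDderiv y hy.1).hasDerivWithinAt
      · intro y hy
        rw [interior_Icc] at hy
        have : (y + 1) * Real.log y - 2 * (y - 1) ≤ 0 := by
          have := pinsker_G_mono (Set.mem_Ioi.mpr hy.1) (Set.mem_Ioi.mpr one_pos) hy.2.le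
          simpa [hG1] using this
        linarith
    have := hanti (Set.mem_Icc.mpr ⟨hx, hx1.le⟩) (Set.mem_Icc.mpr ⟨zero_le_one, le_refl 1⟩) hx1.le
    rw [hD1] at this
    simpa [hD, sub_nonneg] using this

/-- Hoeffding concentration/information bound on the model bias. -/
theorem hoeffding_concentration_information_bound
    {α : Type*} [MeasurableSpace α] (P Q : Measure α)
    [IsProbabilityMeasure P] [IsProbabilityMeasure Q]
    (hac : Q ≪ P)
    (hKL : Integrable (fun x => Real.log ((Q.rnDeriv P x).toReal)) Q)
    (f : α → ℝ) (hf : Measurable f)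
    (a b : ℝ) (hab : a < b)
    (hbound : ∀ᵐ x ∂P, a ≤ f x ∧ f x ≤ b)
    (η : ℝ) (hη : 0 ≤ η) (hQP : klDiv Q P ≤ η^2) :
    |(∫ x, f x ∂Q) - (∫ x, f x ∂P)| ≤ ((b - a) / 2) * Real.sqrt 2 * η := by
  set g : α → ℝ := fun x => (Q.rnDeriv P x).toReal with hgdef
  have hgm : Measurable g := (Measure.measurable_rnDeriv Q P).ennreal_toReal
  have hg0 : ∀ x, 0 ≤ g x := fun x => ENNReal.toReal_nonneg
  have hgint : Integrable g P := Measure.integrable_toReal_rnDeriv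
  have hgint1 : (∫ x, g x ∂P) = 1 := by
    rw [hgdef, Measure.integral_toReal_rnDeriv hac]; simp
  -- KL as a P-integral
  have hglog_int : Integrable (fun x => g x * Real.log (g x)) P := by
    have := (MeasureTheory.integrable_rnDeriv_smul_iff hac
      (f := fun x => Real.log (g x))).mpr hKL
    simpa [smul_eq_mul] using this
  have hKLrw : klDiv Q P = ∫ x, g x * Real.log (g x) ∂P := by
    rw [klDiv, ← MeasureTheory.integral_rnDeriv_smul hac (f := fun x => Real.log (g x))]
    simp [smul_eq_mul]
    rfl
  -- φ and ψ
  set φ : α → ℝ := fun x => g x * Real.log (g x) - g x + 1 with hφdef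
  have hint1 : Integrable (fun x => g x * Real.log (g x) - g x) P := hglog_int.sub hgint
  have hφint : Integrable φ P := hint1.add (integrable_const 1)
  have hφval : (∫ x, φ x ∂P) = klDiv Q P := by
    rw [hKLrw, hφdef]
    rw [integral_add hint1 (integrable_const 1),
      integral_sub hglog_int hgint, hgint1]
    simp
  set ψ : α → ℝ := fun x => 3 * (g x - 1)^2 / (2 * g x + 4) with hψdef
  have hden : ∀ x, 0 < 2 * g x + 4 := fun x => by have := hg0 x; linarith
  have hψ0 : ∀ x, 0 ≤ ψ x := fun x => div_nonneg (by positivity) (hden x).le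
  have hψφ : ∀ x, ψ x ≤ φ x := by
    intro x
    rw [hψdef]
    simp only
    rw [div_le_iff₀ (hden x)]
    have h1 := pinsker_pointwise (hg0 x)
    have h2 : φ x * (2 * g x + 4) = (2 * g x + 4) * (g x * Real.log (g x) - g x + 1) := by
      rw [hφdef]; ring
    linarith
  have hψmeas : Measurable ψ := by
    exact (((hgm.sub measurable_const).pow_const 2).const_mul 3).div
      ((hgm.const_mul 2).add measurable_const)
  have hψint : Integrable ψ P := by
    refine hφint.mono' hψmeas.aestronglyMeasurable ?_
    filter_upwards with x
    rw [Real.norm_eq_abs, abs_of_nonneg (hψ0 x)]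
    exact hψφ x
  have hSψle : (∫ x, ψ x ∂P) ≤ η^2 :=
    le_trans (integral_mono hψint hφint hψφ) (le_of_le_of_eq (le_of_eq hφval) rfl |>.trans hQP)
  have hSψ0 : 0 ≤ ∫ x, ψ x ∂P := integral_nonneg hψ0
  -- the total-variation-like quantity
  have hIint : Integrable (fun x => |g x - 1|) P := (hgint.sub (integrable_const 1)).abs
  set I : ℝ := ∫ x, |g x - 1| ∂P with hIdef
  have hI0 : 0 ≤ I := integral_nonneg fun x => abs_nonneg _
  -- parametric AM-GM bound
  have hIc : ∀ c : ℝ, 0 < c → I ≤ 1 / c + c / 2 * ∫ x, ψ x ∂P := by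
    intro c hc
    have hpt : ∀ x, |g x - 1| ≤ (2 * g x + 4) / (6 * c) + c / 2 * ψ x := by
      intro x
      set u : ℝ := g x - 1 with hu
      set A : ℝ := 2 * g x + 4 with hA
      have hApos : 0 < A := hden x
      have hψx : ψ x = 3 * u^2 / A := rfl
      have hkey : |u| * (6 * c * A) ≤ A^2 + 9 * c^2 * u^2 := by
        nlinarith [sq_nonneg (A - 3 * c * |u|), sq_abs u, abs_nonneg u]
      have hcomb : A / (6 * c) + c / 2 * (3 * u^2 / A) = (A^2 + 9 * c^2 * u^2) / (6 * c * A) := by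
        field_simp
        ring
      rw [hψx, hcomb, le_div_iff₀ (by positivity)]
      exact hkey
    have hint2 : Integrable (fun x => 2 * g x + 4) P := (hgint.const_mul 2).add (integrable_const 4)
    have hint3 : Integrable (fun x => (2 * g x + 4) / (6 * c)) P := hint2.div_const (6 * c)
    have hint4 : Integrable (fun x => c / 2 * ψ x) P := hψint.const_mul (c / 2)
    have hRint : Integrable (fun x => (2 * g x + 4) / (6 * c) + c / 2 * ψ x) P := hint3.add hint4
    have hmono := integral_mono hIint hRint hpt
    have hcalc : (∫ x, ((2 * g x + 4) / (6 * c) + c / 2 * ψ x) ∂P)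
        = 1 / c + c / 2 * ∫ x, ψ x ∂P := by
      rw [integral_add hint3 hint4, integral_div, integral_add (hgint.const_mul 2)
        (integrable_const 4), integral_const_mul, integral_const_mul, hgint1]
      simp [measure_univ]
      ring
    rw [hcalc] at hmono
    exact hmono
  -- I ≤ √2 η
  have hIle : I ≤ Real.sqrt 2 * η := by
    rcases eq_or_lt_of_le hη with h0 | hpos
    · have hη2 : η^2 = 0 := by rw [← h0]; ring
      have hSψzero : (∫ x, ψ x ∂P) = 0 := le_antisymm (hη2 ▸ hSψle) hSψ0
      have hIc' : ∀ c : ℝ, 0 < c → I ≤ 1 / c := by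
        intro c hc
        have := hIc c hc
        rw [hSψzero] at this
        simpa using this
      have hIzero : I ≤ 0 := by
        by_contra h
        push_neg at h
        have h2 := hIc' (2 / I) (by positivity)
        rw [one_div_div] at h2
        linarith
      rw [← h0, mul_zero]
      exact hIzero
    · set c : ℝ := Real.sqrt 2 / η with hcdef
      have hs2 : (0:ℝ) < Real.sqrt 2 := Real.sqrt_pos.mpr two_pos
      have hc : 0 < c := div_pos hs2 hpos
      have h1 := hIc c hc
      have h2 : c / 2 * (∫ x, ψ x ∂P) ≤ c / 2 * η^2 :=
        mul_le_mul_of_nonneg_left hSψle (by positivity)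
      have hsq : Real.sqrt 2 ^ 2 = 2 := Real.sq_sqrt (by norm_num)
      have h3 : 1 / c + c / 2 * η^2 = Real.sqrt 2 * η := by
        rw [hcdef]
        field_simp
        nlinarith [hsq]
      linarith
  -- bias bound via I
  set m : ℝ := (a + b) / 2 with hmdef
  have hbQ : ∀ᵐ x ∂Q, a ≤ f x ∧ f x ≤ b := hbound.filter_mono hac.ae_le
  have hfP : Integrable f P := by
    refine (integrable_const (max |a| |b|)).mono' hf.aestronglyMeasurable ?_
    filter_upwards [hbound] with x hx
    rw [Real.norm_eq_abs]
    refine abs_le.mpr ⟨?_, ?_⟩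
    · have h1 := neg_abs_le a; have h2 := le_max_left |a| |b|; linarith [hx.1]
    · have h1 := le_abs_self b; have h2 := le_max_right |a| |b|; linarith [hx.2]
  have hfQ : Integrable f Q := by
    refine (integrable_const (max |a| |b|)).mono' hf.aestronglyMeasurable ?_
    filter_upwards [hbQ] with x hx
    rw [Real.norm_eq_abs]
    refine abs_le.mpr ⟨?_, ?_⟩
    · have h1 := neg_abs_le a; have h2 := le_max_left |a| |b|; linarith [hx.1]
    · have h1 := le_abs_self b; have h2 := le_max_right |a| |b|; linarith [hx.2]
  have hgfint : Integrable (fun x => g x * f x) P := by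
    have := (MeasureTheory.integrable_rnDeriv_smul_iff hac (f := f)).mpr hfQ
    simpa [smul_eq_mul] using this
  have hprodint : Integrable (fun x => (g x - 1) * (f x - m)) P := by
    have heq : (fun x => (g x - 1) * (f x - m))
        = fun x => (g x * f x - f x) - m * (g x - 1) := by
      funext x; ring
    rw [heq]
    exact (hgfint.sub hfP).sub ((hgint.sub (integrable_const 1)).const_mul m)
  have hΔ : (∫ x, f x ∂Q) - (∫ x, f x ∂P) = ∫ x, (g x - 1) * (f x - m) ∂P := by
    have heq : (fun x => (g x - 1) * (f x - m))
        = fun x => (g x * f x - f x) - m * (g x - 1) := by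
      funext x; ring
    have hint5 : Integrable (fun x => g x * f x - f x) P := hgfint.sub hfP
    have hint6 : Integrable (fun x => g x - 1) P := hgint.sub (integrable_const 1)
    rw [heq, integral_sub hint5 (hint6.const_mul m),
      integral_sub hgfint hfP, integral_const_mul,
      integral_sub hgint (integrable_const 1), hgint1]
    have hQf : (∫ x, f x ∂Q) = ∫ x, g x * f x ∂P := by
      rw [← MeasureTheory.integral_rnDeriv_smul hac (f := f)]
      simp [smul_eq_mul]
      rfl
    rw [hQf]
    simp [measure_univ]
  have habs : |∫ x, (g x - 1) * (f x - m) ∂P| ≤ (b - a) / 2 * I := by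
    calc |∫ x, (g x - 1) * (f x - m) ∂P| ≤ ∫ x, |g x - 1| * |f x - m| ∂P := by
          simpa [Real.norm_eq_abs] using
            norm_integral_le_integral_norm (fun x => (g x - 1) * (f x - m)) (μ := P)
      _ ≤ ∫ x, (b - a) / 2 * |g x - 1| ∂P := by
          refine integral_mono_ae (hprodint.abs.congr ?_) (hIint.const_mul ((b - a) / 2)) ?_
          · filter_upwards with x; rw [abs_mul]
          filter_upwards [hbound] with x hx
          have hfm : |f x - m| ≤ (b - a) / 2 := by
            rw [hmdef]
            refine abs_le.mpr ⟨by linarith [hx.1], by linarith [hx.2]⟩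
          calc |g x - 1| * |f x - m| ≤ |g x - 1| * ((b - a) / 2) :=
                mul_le_mul_of_nonneg_left hfm (abs_nonneg _)
            _ = (b - a) / 2 * |g x - 1| := by ring
      _ = (b - a) / 2 * I := by rw [integral_const_mul]
  rw [hΔ]
  calc |∫ x, (g x - 1) * (f x - m) ∂P| ≤ (b - a) / 2 * I := habs
    _ ≤ (b - a) / 2 * (Real.sqrt 2 * η) :=
        mul_le_mul_of_nonneg_left hIle (by linarith)
    _ = (b - a) / 2 * Real.sqrt 2 * η := by ring
end

section
/- (Scaling-free statistical estimator bound) Let X₁,…,Xₙ be i.i.d. with law P and ψ satisfy bounded differences with d_k ≤ C/n for all k. Then for any probability Q on the single-variable space, |E_{Pⁿ}[ψ(X₁,…,Xₙ)] - E_{Qⁿ}[ψ(X₁,…,Xₙ)]| ≤ C √(2 R(Q||P)), uniformly in n. -/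
/-!
Changing the law of a single coordinate from `P` to `Q` moves the mean of a function of
oscillation `d` by at most `d ‖Q - P‖₁ = d ∫ |dQ/dP - 1| dP`: after recentring, the difference of
means is the integral of the function against `1 - dQ/dP`, which has mean zero. Swapping the `n` coordinates
one at a time therefore costs at most `n · (C / n) · ‖Q - P‖₁ = C ‖Q - P‖₁`, whatever `n` is, and
Pinsker's inequality `‖Q - P‖₁ ≤ √(2 R(Q‖P))` concludes. Pinsker's inequality follows from
Cauchy–Schwarz and the pointwise bound `3 (t - 1)² ≤ (2t + 4) (t log t - t + 1)`, a first-derivative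
test at `t = 1`.
-/

open MeasureTheory ProbabilityTheory Real

open Set Function
open InformationTheory (klFun klFun_apply klFun_one klFun_nonneg hasDerivAt_klFun)

theorem two_mul_sub_one_le_add_one_mul_log {t : ℝ} (ht : 1 ≤ t) :
    2 * (t - 1) ≤ (t + 1) * log t := by
  have h := le_log_one_add_of_nonneg (sub_nonneg.2 ht)
  rw [add_sub_cancel, div_le_iff₀ (by linarith)] at h
  linarith

theorem add_one_mul_log_le_two_mul_sub_one {t : ℝ} (h₀ : 0 < t) (h₁ : t ≤ 1) :
    (t + 1) * log t ≤ 2 * (t - 1) := by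
  have h := two_mul_sub_one_le_add_one_mul_log (one_le_inv₀ h₀ |>.2 h₁)
  rw [log_inv] at h
  have h' := mul_le_mul_of_nonneg_left h h₀.le
  field_simp at h'
  linarith

theorem three_mul_sq_sub_one_le_mul_klFun {t : ℝ} (ht : 0 ≤ t) :
    3 * (t - 1) ^ 2 ≤ (2 * t + 4) * klFun t := by
  set h : ℝ → ℝ := fun s ↦ (2 * s + 4) * klFun s - 3 * (s - 1) ^ 2
  have hcont : Continuous h := by fun_prop
  have hderiv : ∀ s ≠ 0, HasDerivAt h (4 * ((s + 1) * log s - 2 * (s - 1))) s := by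
    intro s hs
    refine ((((hasDerivAt_id s).const_mul 2).add_const 4 |>.mul (hasDerivAt_klFun hs)).sub
      (((hasDerivAt_id s).sub_const 1).pow 2 |>.const_mul 3)).congr_deriv ?_
    simp only [klFun_apply, id]
    ring
  have hmin : IsMinOn h (Ici 0) 1 := by
    refine isMinOn_Ici_of_deriv hcont.continuousAt hcont.continuousAt
      (fun s hs ↦ (hderiv s hs.1.ne').differentiableAt.differentiableWithinAt)
      (fun s hs ↦ (hderiv s (by linarith [mem_Ioi.1 hs])).differentiableAt.differentiableWithinAt)
      (fun s hs ↦ ?_) (fun s hs ↦ ?_)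
    · rw [(hderiv s hs.1.ne').deriv]
      linarith [add_one_mul_log_le_two_mul_sub_one hs.1 hs.2.le]
    · rw [(hderiv s (by linarith [mem_Ioi.1 hs])).deriv]
      linarith [two_mul_sub_one_le_add_one_mul_log (le_of_lt hs)]
  have := hmin ht
  simp only [h, klFun_one] at this
  norm_num at this
  linarith

section

variable {α : Type*} [MeasurableSpace α] {μ : Measure α} {u v : α → ℝ}

theorem memLp_two_sqrt (hu : 0 ≤ u) (hui : Integrable u μ) : MemLp (fun x ↦ √(u x)) 2 μ := by
  refine (memLp_two_iff_integrable_sq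
    (continuous_sqrt.comp_aestronglyMeasurable hui.aestronglyMeasurable)).2 ?_
  exact hui.congr (.of_forall fun x ↦ (sq_sqrt (hu x)).symm)

theorem integrable_sqrt_mul_sqrt (hu : 0 ≤ u) (hv : 0 ≤ v) (hui : Integrable u μ)
    (hvi : Integrable v μ) : Integrable (fun x ↦ √(u x) * √(v x)) μ :=
  (memLp_two_sqrt hu hui).integrable_mul (memLp_two_sqrt hv hvi)

theorem integral_sqrt_mul_sqrt_le (hu : 0 ≤ u) (hv : 0 ≤ v) (hui : Integrable u μ)
    (hvi : Integrable v μ) : ∫ x, √(u x) * √(v x) ∂μ ≤ √((∫ x, u x ∂μ) * ∫ x, v x ∂μ) := by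
  have h := integral_mul_le_Lp_mul_Lq_of_nonneg Real.HolderConjugate.two_two
    (.of_forall fun x ↦ sqrt_nonneg (u x)) (.of_forall fun x ↦ sqrt_nonneg (v x))
    (by simpa using memLp_two_sqrt hu hui) (by simpa using memLp_two_sqrt hv hvi)
  simp only [rpow_two, sq_sqrt (hu _), sq_sqrt (hv _)] at h
  rwa [sqrt_mul (integral_nonneg hu), sqrt_eq_rpow, sqrt_eq_rpow]

theorem integral_abs_sub_one_le_sqrt_two_mul_integral_klFun [IsProbabilityMeasure μ] {f : α → ℝ}
    (hf₀ : ∀ x, 0 ≤ f x) (hf : Integrable f μ) (hf₁ : ∫ x, f x ∂μ = 1)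
    (hkl : Integrable (fun x ↦ klFun (f x)) μ) :
    ∫ x, |f x - 1| ∂μ ≤ √(2 * ∫ x, klFun (f x) ∂μ) := by
  have hkl₀ : 0 ≤ fun x ↦ klFun (f x) := fun x ↦ klFun_nonneg (hf₀ x)
  have hw₀ : 0 ≤ fun x ↦ (2 * f x + 4) / 3 := fun x ↦ by have := hf₀ x; positivity
  have hw : Integrable (fun x ↦ (2 * f x + 4) / 3) μ :=
    ((hf.const_mul 2).add (integrable_const 4)).div_const 3
  have hw₁ : ∫ x, (2 * f x + 4) / 3 ∂μ = 2 := by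
    rw [integral_div, integral_add (hf.const_mul 2) (integrable_const 4), integral_const_mul, hf₁]
    norm_num
  have hpoint : ∀ x, |f x - 1| ≤ √(klFun (f x)) * √((2 * f x + 4) / 3) := fun x ↦ by
    rw [← sqrt_mul (hkl₀ x), ← sqrt_sq_eq_abs]
    gcongr
    rw [mul_div_assoc', le_div_iff₀ three_pos]
    linarith [three_mul_sq_sub_one_le_mul_klFun (hf₀ x)]
  calc ∫ x, |f x - 1| ∂μ ≤ ∫ x, √(klFun (f x)) * √((2 * f x + 4) / 3) ∂μ :=
        integral_mono (hf.sub (integrable_const 1)).abs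
          (integrable_sqrt_mul_sqrt hkl₀ hw₀ hkl hw) hpoint
    _ ≤ √((∫ x, klFun (f x) ∂μ) * ∫ x, (2 * f x + 4) / 3 ∂μ) :=
        integral_sqrt_mul_sqrt_le hkl₀ hw₀ hkl hw
    _ = √(2 * ∫ x, klFun (f x) ∂μ) := by rw [hw₁, mul_comm]

theorem klDiv_eq_integral_klFun_rnDeriv {P Q : Measure α} [IsProbabilityMeasure P]
    [IsProbabilityMeasure Q] (hac : Q ≪ P) :
    klDiv Q P = ∫ x, klFun (Q.rnDeriv P x).toReal ∂P := by
  rw [← InformationTheory.toReal_klDiv_eq_integral_klFun hac,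
    InformationTheory.toReal_klDiv_of_measure_eq hac (by simp)]
  rfl

theorem integral_abs_rnDeriv_sub_one_le_sqrt_two_mul_klDiv {P Q : Measure α}
    [IsProbabilityMeasure P] [IsProbabilityMeasure Q] (hac : Q ≪ P)
    (hKL : Integrable (llr Q P) Q) :
    ∫ x, |(Q.rnDeriv P x).toReal - 1| ∂P ≤ √(2 * klDiv Q P) := by
  rw [klDiv_eq_integral_klFun_rnDeriv hac]
  refine integral_abs_sub_one_le_sqrt_two_mul_integral_klFun (fun x ↦ ENNReal.toReal_nonneg)
    Measure.integrable_toReal_rnDeriv ?_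
    ((InformationTheory.integrable_klFun_rnDeriv_iff hac).2 hKL)
  rw [Measure.integral_toReal_rnDeriv hac]
  simp

theorem integrable_of_abs_sub_le [IsFiniteMeasure μ] {f : α → ℝ}
    (hf : Measurable f) {B : ℝ} (hB : ∀ x y, |f x - f y| ≤ B) : Integrable f μ := by
  cases isEmpty_or_nonempty α with
  | inl _ => exact .of_isEmpty
  | inr h =>
    obtain ⟨x₀⟩ := h
    refine .of_bound hf.aestronglyMeasurable (|f x₀| + B) (.of_forall fun x ↦ ?_)
    rw [norm_eq_abs]
    linarith [abs_sub_abs_le_abs_sub (f x) (f x₀), hB x x₀]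

theorem abs_integral_sub_integral_le_of_abs_sub_le {P Q : Measure α} [IsProbabilityMeasure P]
    [IsProbabilityMeasure Q] (hac : Q ≪ P) {f : α → ℝ} (hf : Measurable f) {d : ℝ}
    (hd : ∀ x y, |f x - f y| ≤ d) :
    |∫ x, f x ∂P - ∫ x, f x ∂Q| ≤ d * ∫ x, |(Q.rnDeriv P x).toReal - 1| ∂P := by
  obtain ⟨x₀⟩ := nonempty_of_isProbabilityMeasure P
  set g : α → ℝ := fun x ↦ (Q.rnDeriv P x).toReal
  have hg : Integrable g P := Measure.integrable_toReal_rnDeriv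
  have hg₁ : ∫ x, g x ∂P = 1 := by
    rw [Measure.integral_toReal_rnDeriv hac]
    simp
  have hfP : Integrable f P := integrable_of_abs_sub_le hf hd
  have hgf : Integrable (fun x ↦ g x * f x) P :=
    (integrable_rnDeriv_smul_iff hac).2 (integrable_of_abs_sub_le hf hd)
  have hfQ : ∫ x, f x ∂Q = ∫ x, g x * f x ∂P := (integral_rnDeriv_smul hac).symm
  have hcentre : ∫ x, f x ∂P - ∫ x, f x ∂Q = ∫ x, (1 - g x) * (f x - f x₀) ∂P := by
    have hexpand : ∀ x, (1 - g x) * (f x - f x₀) = f x - g x * f x - f x₀ + f x₀ * g x :=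
      fun x ↦ by ring
    simp_rw [hexpand]
    rw [integral_add (f := fun x ↦ f x - g x * f x - f x₀)
        ((hfP.sub hgf).sub (integrable_const _)) (hg.const_mul _),
      integral_sub (f := fun x ↦ f x - g x * f x) (hfP.sub hgf) (integrable_const _),
      integral_sub hfP hgf,
      integral_const_mul, hg₁, hfQ]
    simp
  calc |∫ x, f x ∂P - ∫ x, f x ∂Q| ≤ ∫ x, |(1 - g x) * (f x - f x₀)| ∂P := by
        rw [hcentre]; exact abs_integral_le_integral_abs
    _ ≤ ∫ x, d * |g x - 1| ∂P := by
        refine integral_mono_of_nonneg (.of_forall fun x ↦ abs_nonneg _)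
          ((hg.sub (integrable_const 1)).abs.const_mul d) (.of_forall fun x ↦ ?_)
        dsimp only
        rw [abs_mul, abs_sub_comm, mul_comm]
        exact mul_le_mul_of_nonneg_right (hd x x₀) (abs_nonneg _)
    _ = d * ∫ x, |g x - 1| ∂P := integral_const_mul d _

end

def HasBoundedDifferences {ι X : Type*} [DecidableEq ι] (ψ : (ι → X) → ℝ) (d : ℝ) : Prop :=
  ∀ x i y, |ψ x - ψ (update x i y)| ≤ d

namespace HasBoundedDifferences

variable {X : Type*} {n : ℕ} {d : ℝ}

theorem comp_cons {ψ : (Fin (n + 1) → X) → ℝ} (h : HasBoundedDifferences ψ d) (y : X) :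
    HasBoundedDifferences (fun x : Fin n → X ↦ ψ (Fin.cons y x)) d := fun x i z ↦ by
  simpa only [Fin.cons_update] using h (Fin.cons y x) i.succ z

theorem abs_cons_sub_cons_le {ψ : (Fin (n + 1) → X) → ℝ} (h : HasBoundedDifferences ψ d)
    (x : Fin n → X) (y z : X) : |ψ (Fin.cons y x) - ψ (Fin.cons z x)| ≤ d := by
  simpa only [Fin.update_cons_zero] using h (Fin.cons z x) 0 y |>.trans_eq' (abs_sub_comm _ _)

theorem abs_sub_le {ψ : (Fin n → X) → ℝ} (h : HasBoundedDifferences ψ d) (x y : Fin n → X) :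
    |ψ x - ψ y| ≤ n * d := by
  induction n with
  | zero => simp [Subsingleton.elim x y]
  | succ n ih =>
    rw [← Fin.cons_self_tail x, ← Fin.cons_self_tail y]
    calc |ψ (Fin.cons (x 0) (Fin.tail x)) - ψ (Fin.cons (y 0) (Fin.tail y))|
        ≤ |ψ (Fin.cons (x 0) (Fin.tail x)) - ψ (Fin.cons (y 0) (Fin.tail x))|
          + |ψ (Fin.cons (y 0) (Fin.tail x)) - ψ (Fin.cons (y 0) (Fin.tail y))| :=
          _root_.abs_sub_le _ _ _
      _ ≤ d + n * d := add_le_add (h.abs_cons_sub_cons_le _ _ _) (ih (h.comp_cons _) _ _)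
      _ = (n + 1 : ℕ) * d := by push_cast; ring

variable [MeasurableSpace X]

theorem integrable (μ : Measure (Fin n → X)) [IsFiniteMeasure μ] {ψ : (Fin n → X) → ℝ}
    (hψ : Measurable ψ) (h : HasBoundedDifferences ψ d) : Integrable ψ μ :=
  integrable_of_abs_sub_le hψ h.abs_sub_le

theorem abs_integral_cons_sub_integral_cons_le {ψ : (Fin (n + 1) → X) → ℝ}
    (h : HasBoundedDifferences ψ d) (μ : Measure X) [IsProbabilityMeasure μ]
    (hψ : ∀ y, Measurable fun x : Fin n → X ↦ ψ (Fin.cons y x)) (y z : X) :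
    |∫ x, ψ (Fin.cons y x) ∂(Measure.pi fun _ ↦ μ) -
      ∫ x, ψ (Fin.cons z x) ∂(Measure.pi fun _ ↦ μ)| ≤ d := by
  rw [← integral_sub ((h.comp_cons y).integrable _ (hψ y)) ((h.comp_cons z).integrable _ (hψ z))]
  simpa using norm_integral_le_of_norm_le_const (μ := Measure.pi fun _ : Fin n ↦ μ)
    (.of_forall fun x ↦ (norm_eq_abs _).trans_le (h.abs_cons_sub_cons_le x y z))

end HasBoundedDifferences

section

variable {X : Type*} [MeasurableSpace X] {n : ℕ}

theorem measurable_finCons_prod :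
    Measurable (fun p : X × (Fin n → X) ↦ (Fin.cons p.1 p.2 : Fin (n + 1) → X)) := by
  simpa [MeasurableEquiv.piFinSuccAbove, Fin.insertNthEquiv, Fin.insertNth_zero'] using
    (MeasurableEquiv.piFinSuccAbove (fun _ : Fin (n + 1) ↦ X) 0).symm.measurable

theorem integral_pi_fin_succ (μ : Measure X) [SigmaFinite μ] {ψ : (Fin (n + 1) → X) → ℝ}
    (hψ : Integrable ψ (Measure.pi fun _ ↦ μ)) :
    ∫ x, ψ x ∂(Measure.pi fun _ ↦ μ) =
      ∫ y, ∫ x, ψ (Fin.cons y x) ∂(Measure.pi fun _ : Fin n ↦ μ) ∂μ := by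
  have hmp := measurePreserving_piFinSuccAbove (fun _ : Fin (n + 1) ↦ μ) 0
  rw [← hmp.symm.integral_comp', integral_prod]
  · simp [MeasurableEquiv.piFinSuccAbove, Fin.insertNthEquiv, Fin.insertNth_zero']
  · exact (hmp.symm.integrable_comp_emb (MeasurableEquiv.measurableEmbedding _)).2 hψ

theorem measurable_integral_cons (μ : Measure X) [SigmaFinite μ] {ψ : (Fin (n + 1) → X) → ℝ}
    (hψ : Measurable ψ) :
    Measurable fun y ↦ ∫ x, ψ (Fin.cons y x) ∂(Measure.pi fun _ : Fin n ↦ μ) :=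
  ((hψ.comp measurable_finCons_prod).stronglyMeasurable.integral_prod_right').measurable

theorem abs_integral_pi_sub_integral_pi_le {P Q : Measure X} [IsProbabilityMeasure P]
    [IsProbabilityMeasure Q] (hac : Q ≪ P)
    {ψ : (Fin n → X) → ℝ} (hψ : Measurable ψ) {d : ℝ} (h : HasBoundedDifferences ψ d) :
    |∫ x, ψ x ∂(Measure.pi fun _ ↦ P) - ∫ x, ψ x ∂(Measure.pi fun _ ↦ Q)| ≤
      n * d * ∫ x, |(Q.rnDeriv P x).toReal - 1| ∂P := by
  induction n with
  | zero =>
    rw [Measure.pi_of_empty (fun _ ↦ P), Measure.pi_of_empty (fun _ ↦ Q)]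
    simp
  | succ n ih =>
    set ε := ∫ x, |(Q.rnDeriv P x).toReal - 1| ∂P
    let F (μ : Measure X) (y : X) : ℝ := ∫ x, ψ (Fin.cons y x) ∂(Measure.pi fun _ : Fin n ↦ μ)
    have hsec (y : X) : Measurable fun x : Fin n → X ↦ ψ (Fin.cons y x) :=
      hψ.comp (measurable_finCons_prod.comp measurable_prodMk_left)
    have hF (μ : Measure X) [IsProbabilityMeasure μ] (ν : Measure X) [IsProbabilityMeasure ν] :
        Integrable (F μ) ν :=
      integrable_of_abs_sub_le (measurable_integral_cons μ hψ)
        (h.abs_integral_cons_sub_integral_cons_le μ hsec)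
    rw [integral_pi_fin_succ P (h.integrable _ hψ), integral_pi_fin_succ Q (h.integrable _ hψ)]
    calc |∫ y, F P y ∂P - ∫ y, F Q y ∂Q|
        ≤ |∫ y, F P y ∂P - ∫ y, F P y ∂Q| + |∫ y, F P y - F Q y ∂Q| := by
          rw [integral_sub (hF P Q) (hF Q Q)]
          exact abs_sub_le _ _ _
      _ ≤ d * ε + n * d * ε := by
          refine add_le_add (abs_integral_sub_integral_le_of_abs_sub_le hac
            (measurable_integral_cons P hψ) (h.abs_integral_cons_sub_integral_cons_le P hsec)) ?_
          simpa using norm_integral_le_of_norm_le_const (μ := Q)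
            (.of_forall fun y ↦ (norm_eq_abs _).trans_le (ih (hsec y) (h.comp_cons y)))
      _ = (n + 1 : ℕ) * d * ε := by push_cast; ring

end

/-- scaling-free model bias bound for statistical estimators
of i.i.d. samples with bounded differences constants C/n. -/
theorem iid_estimator_bias_bound
    {X : Type*} [MeasurableSpace X] {n : ℕ} (hn : 0 < n)
    (P Q : Measure X) [IsProbabilityMeasure P] [IsProbabilityMeasure Q]
    (hac : Q ≪ P)
    (hKL : Integrable (fun x => Real.log ((Q.rnDeriv P x).toReal)) Q)
    (ψ : (Fin n → X) → ℝ) (hψ : Measurable ψ) (C : ℝ)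
    (hbd : ∀ (x : Fin n → X) (k : Fin n) (y : X),
      |ψ x - ψ (Function.update x k y)| ≤ C / n) :
    |(∫ x, ψ x ∂(Measure.pi fun _ : Fin n => P))
      - (∫ x, ψ x ∂(Measure.pi fun _ : Fin n => Q))| ≤
      C * Real.sqrt (2 * klDiv Q P) := by
  obtain ⟨x₀⟩ := nonempty_of_isProbabilityMeasure P
  have hC : 0 ≤ C := by
    have h₀ := hbd (fun _ ↦ x₀) ⟨0, hn⟩ x₀
    rw [update_eq_self, sub_self, abs_zero, le_div_iff₀ (by exact_mod_cast hn)] at h₀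
    simpa using h₀
  calc _ ≤ n * (C / n) * ∫ x, |(Q.rnDeriv P x).toReal - 1| ∂P :=
        abs_integral_pi_sub_integral_pi_le hac hψ hbd
    _ = C * ∫ x, |(Q.rnDeriv P x).toReal - 1| ∂P := by field_simp
    _ ≤ C * √(2 * klDiv Q P) := by
        gcongr
        exact integral_abs_rnDeriv_sub_one_le_sqrt_two_mul_klDiv hac hKL
end

section
/- (Variance misspecification bound) If X is bounded, |X| ≤ M under both P and Q, then |Var_P[X] - Var_Q[X]| ≤ 8M² √(2 R(Q||P)). -/
/-!
Write `g = dQ/dP`. For any statistic `f` bounded by `C` under `P`,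
`|E_Q f - E_P f| = |E_P[(g - 1) f]| ≤ C ‖g - 1‖_{L¹(P)}`. Applying this to `X` and `X²` and writing
`Var = E[X²] - E[X]²` gives `|Var_P X - Var_Q X| ≤ 3 M² ‖g - 1‖_{L¹(P)}`, and Pinsker's inequality
`‖g - 1‖_{L¹(P)} ≤ √(2 R(Q‖P))` finishes. Pinsker follows by integrating the pointwise bound
`3 (y - 1)² ≤ (2 y + 4) (y log y - y + 1)` after an AM–GM step.
-/

open MeasureTheory ProbabilityTheory Real

open InformationTheory (klFun klFun_apply klFun_zero klFun_one hasDerivAt_klFun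
  integral_klFun_rnDeriv integrable_klFun_rnDeriv_iff)

theorem isMinOn_of_hasDerivAt_of_sign {f f' : ℝ → ℝ} {s : Set ℝ} {a : ℝ} (hs : s.OrdConnected)
    (ha : a ∈ s) (hf : ∀ x ∈ s, HasDerivAt f (f' x) x) (hsign : ∀ x ∈ s, 0 ≤ (x - a) * f' x) :
    IsMinOn f s a := by
  refine isMinOn_iff.2 fun y hy => ?_
  have hcont : ∀ {b c : ℝ}, b ∈ s → c ∈ s → ContinuousOn f (Set.Icc b c) := fun hb hc x hx =>
    (hf x (hs.out hb hc hx)).continuousAt.continuousWithinAt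
  have hderiv : ∀ {b c : ℝ}, b ∈ s → c ∈ s → ∀ x ∈ Set.Ioo b c, HasDerivAt f (f' x) x :=
    fun hb hc x hx => hf x (hs.out hb hc (Set.Ioo_subset_Icc_self hx))
  rcases lt_trichotomy y a with hya | rfl | hay
  · obtain ⟨c, hc, hslope⟩ := exists_hasDerivAt_eq_slope f f' hya (hcont hy ha) (hderiv hy ha)
    have hc_in := hs.out hy ha (Set.Ioo_subset_Icc_self hc)
    have : f' c ≤ 0 := nonpos_of_mul_nonneg_right (hsign c hc_in) (by linarith [hc.2])
    rw [hslope, div_nonpos_iff] at this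
    rcases this with ⟨_, h⟩ | ⟨h, _⟩ <;> linarith
  · exact le_rfl
  · obtain ⟨c, hc, hslope⟩ := exists_hasDerivAt_eq_slope f f' hay (hcont ha hy) (hderiv ha hy)
    have hc_in := hs.out ha hy (Set.Ioo_subset_Icc_self hc)
    have : 0 ≤ f' c := nonneg_of_mul_nonneg_right (hsign c hc_in) (by linarith [hc.1])
    rw [hslope] at this
    rcases div_nonneg_iff.1 this with ⟨h, _⟩ | ⟨_, h⟩ <;> linarith

theorem monotoneOn_add_one_mul_log_sub :
    MonotoneOn (fun x => (x + 1) * log x - 2 * (x - 1)) (Set.Ioi 0) := by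
  have hderiv : ∀ x ∈ Set.Ioi (0 : ℝ),
      HasDerivAt (fun x => (x + 1) * log x - 2 * (x - 1)) (log x + x⁻¹ - 1) x := by
    intro x (hx : 0 < x)
    refine ((((hasDerivAt_id' x).add_const 1).mul (hasDerivAt_log (ne_of_gt hx))).sub
      (((hasDerivAt_id' x).sub_const 1).const_mul 2)).congr_deriv ?_
    field_simp
    ring
  refine monotoneOn_of_hasDerivWithinAt_nonneg (f' := fun x => log x + x⁻¹ - 1) (convex_Ioi 0)
    (fun x hx => (hderiv x hx).continuousAt.continuousWithinAt) (fun x hx => ?_) fun x hx => ?_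
  · rw [interior_Ioi] at hx ⊢
    exact (hderiv x hx).hasDerivWithinAt
  · rw [interior_Ioi] at hx
    linarith [one_sub_inv_le_log_of_pos hx]

theorem sub_one_mul_add_one_mul_log_sub_nonneg {x : ℝ} (hx : 0 < x) :
    0 ≤ (x - 1) * ((x + 1) * log x - 2 * (x - 1)) := by
  have hone : (1 : ℝ) ∈ Set.Ioi 0 := Set.mem_Ioi.2 one_pos
  rcases le_total x 1 with h | h
  · have := monotoneOn_add_one_mul_log_sub hx hone h
    simp only [log_one, mul_zero, sub_self] at this
    exact mul_nonneg_of_nonpos_of_nonpos (by linarith) (by linarith)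
  · have := monotoneOn_add_one_mul_log_sub hone hx h
    simp only [log_one, mul_zero, sub_self] at this
    exact mul_nonneg (by linarith) (by linarith)

theorem three_mul_sq_sub_one_le_klFun {x : ℝ} (hx : 0 ≤ x) :
    3 * (x - 1) ^ 2 ≤ (2 * x + 4) * klFun x := by
  rcases hx.eq_or_lt with rfl | hx
  · norm_num [klFun_zero]
  have hmin : IsMinOn (fun x => (2 * x + 4) * klFun x - 3 * (x - 1) ^ 2) (Set.Ioi 0) 1 := by
    refine isMinOn_of_hasDerivAt_of_sign (f' := fun x => 4 * ((x + 1) * log x - 2 * (x - 1)))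
      Set.ordConnected_Ioi (Set.mem_Ioi.2 one_pos) (fun x hx => ?_) fun x hx => ?_
    · refine ((((hasDerivAt_id' x).const_mul 2).add_const 4).mul
        (hasDerivAt_klFun (ne_of_gt hx))).sub
        ((((hasDerivAt_id' x).sub_const 1).pow 2).const_mul 3) |>.congr_deriv ?_
      simp only [klFun_apply]
      ring
    · nlinarith [sub_one_mul_add_one_mul_log_sub_nonneg (Set.mem_Ioi.1 hx)]
  have := hmin (Set.mem_Ioi.2 hx)
  simp only [klFun_one] at this
  norm_num at this
  linarith

theorem two_mul_abs_sub_one_le {x : ℝ} (l : ℝ) (hx : 0 ≤ x) :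
    2 * l * |x - 1| ≤ l ^ 2 * (2 * x + 4) / 3 + klFun x := by
  have hw : 0 < 2 * x + 4 := by linarith
  nlinarith [three_mul_sq_sub_one_le_klFun hx, sq_nonneg (l * (2 * x + 4) - 3 * |x - 1|),
    sq_abs (x - 1)]

section Misspecification

variable {α : Type*} [MeasurableSpace α] {P Q : Measure α}

theorem abs_integral_sub_integral_le [IsFiniteMeasure P] [IsFiniteMeasure Q] (hac : Q ≪ P)
    {f : α → ℝ} {C : ℝ} (hf : AEStronglyMeasurable f P) (hfC : ∀ᵐ x ∂P, |f x| ≤ C) :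
    |∫ x, f x ∂Q - ∫ x, f x ∂P| ≤ C * ∫ x, |(Q.rnDeriv P x).toReal - 1| ∂P := by
  have hfP : Integrable f P := Integrable.of_bound hf C hfC
  have hfQ : Integrable f Q := Integrable.of_bound (hf.mono_ac hac) C (hac.ae_le hfC)
  have hgf : Integrable (fun x => (Q.rnDeriv P x).toReal • f x) P :=
    (integrable_rnDeriv_smul_iff hac).2 hfQ
  calc |∫ x, f x ∂Q - ∫ x, f x ∂P|
      = |∫ x, ((Q.rnDeriv P x).toReal - 1) * f x ∂P| := by
        rw [← integral_rnDeriv_smul hac, ← integral_sub hgf hfP]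
        simp only [smul_eq_mul, sub_mul, one_mul]
    _ ≤ ∫ x, C * |(Q.rnDeriv P x).toReal - 1| ∂P := by
        refine abs_integral_le_integral_abs.trans (integral_mono_ae ?_ ?_ ?_)
        · exact (hgf.sub hfP).abs.congr (ae_of_all _ fun x => by simp [smul_eq_mul, sub_mul])
        · exact ((Measure.integrable_toReal_rnDeriv.sub (integrable_const 1)).abs).const_mul C
        · filter_upwards [hfC] with x hx
          rw [abs_mul, mul_comm C]
          exact mul_le_mul_of_nonneg_left hx (abs_nonneg _)
    _ = C * ∫ x, |(Q.rnDeriv P x).toReal - 1| ∂P := integral_const_mul C _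

theorem integral_abs_rnDeriv_sub_one_le_sqrt [IsProbabilityMeasure P] [IsProbabilityMeasure Q]
    (hac : Q ≪ P) (hKL : Integrable (llr Q P) Q) :
    ∫ x, |(Q.rnDeriv P x).toReal - 1| ∂P ≤ √(2 * klDiv Q P) := by
  set g := fun x => (Q.rnDeriv P x).toReal
  set L := ∫ x, |g x - 1| ∂P
  rcases le_or_gt L 0 with hL | hL
  · exact hL.trans (sqrt_nonneg _)
  have hg : Integrable g P := Measure.integrable_toReal_rnDeriv
  have hg_one : ∫ x, g x ∂P = 1 := by simp [g, Measure.integral_toReal_rnDeriv hac]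
  have hkl : ∫ x, klFun (g x) ∂P = klDiv Q P := by
    simp [g, integral_klFun_rnDeriv hac hKL, klDiv, llr]
  have hweight : ∫ x, (L / 2) ^ 2 * (2 * g x + 4) / 3 ∂P = L ^ 2 / 2 := by
    rw [integral_div, integral_const_mul, integral_add (hg.const_mul 2) (integrable_const 4),
      integral_const_mul, hg_one]
    simp only [integral_const, probReal_univ, smul_eq_mul]
    ring
  have hkl_int : Integrable (fun x => klFun (g x)) P := (integrable_klFun_rnDeriv_iff hac).2 hKL
  have hweight_int : Integrable (fun x => (L / 2) ^ 2 * (2 * g x + 4) / 3) P :=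
    (((hg.const_mul 2).add (integrable_const 4)).const_mul _).div_const 3
  -- `l = L / 2` is the AM–GM weight that turns `2 l L ≤ 2 l² + R` into `L² ≤ 2 R`
  have hsq : L ^ 2 ≤ L ^ 2 / 2 + klDiv Q P := by
    have : ∫ x, 2 * (L / 2) * |g x - 1| ∂P ≤
        ∫ x, ((L / 2) ^ 2 * (2 * g x + 4) / 3 + klFun (g x)) ∂P :=
      integral_mono ((hg.sub (integrable_const 1)).abs.const_mul (2 * (L / 2)))
        (hweight_int.add hkl_int)
        fun x => two_mul_abs_sub_one_le (L / 2) (ENNReal.toReal_nonneg (a := Q.rnDeriv P x))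
    rw [integral_const_mul, integral_add hweight_int hkl_int, hweight, hkl] at this
    linarith
  rw [le_sqrt hL.le (by nlinarith)]
  linarith

theorem abs_variance_sub_variance_le [IsProbabilityMeasure P] [IsProbabilityMeasure Q]
    (hac : Q ≪ P) {X : α → ℝ} {M : ℝ} (hX : AEStronglyMeasurable X P)
    (hXM : ∀ᵐ x ∂P, |X x| ≤ M) :
    |variance X P - variance X Q| ≤ 3 * M ^ 2 * ∫ x, |(Q.rnDeriv P x).toReal - 1| ∂P := by
  set L := ∫ x, |(Q.rnDeriv P x).toReal - 1| ∂P
  have hmean : |∫ x, X x ∂Q - ∫ x, X x ∂P| ≤ M * L := abs_integral_sub_integral_le hac hX hXM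
  have hsq : |∫ x, X x ^ 2 ∂Q - ∫ x, X x ^ 2 ∂P| ≤ M ^ 2 * L := by
    refine abs_integral_sub_integral_le hac (hX.pow 2) ?_
    filter_upwards [hXM] with x hx
    rw [abs_pow]
    exact pow_le_pow_left₀ (abs_nonneg _) hx 2
  have hbound : ∀ (μ : Measure α) [IsProbabilityMeasure μ], (∀ᵐ x ∂μ, |X x| ≤ M) →
      |∫ x, X x ∂μ| ≤ M := fun μ _ h => by
    simpa using norm_integral_le_of_norm_le_const (μ := μ) (f := X) (C := M) h
  have hvar : ∀ (μ : Measure α) [IsProbabilityMeasure μ], AEStronglyMeasurable X μ →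
      (∀ᵐ x ∂μ, |X x| ≤ M) → variance X μ = ∫ x, X x ^ 2 ∂μ - (∫ x, X x ∂μ) ^ 2 :=
    fun μ _ hX h => variance_eq_sub (memLp_of_bounded (h.mono fun x => abs_le.1) hX 2)
  have hXMQ : ∀ᵐ x ∂Q, |X x| ≤ M := hac.ae_le hXM
  rw [hvar P hX hXM, hvar Q (hX.mono_ac hac) hXMQ]
  set a := ∫ x, X x ∂P
  set b := ∫ x, X x ∂Q
  have hab : |a + b| ≤ 2 * M := by
    linarith [abs_add_le a b, hbound P hXM, hbound Q hXMQ]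
  calc |(∫ x, X x ^ 2 ∂P) - a ^ 2 - ((∫ x, X x ^ 2 ∂Q) - b ^ 2)|
      = |-(∫ x, X x ^ 2 ∂Q - ∫ x, X x ^ 2 ∂P) + (b - a) * (a + b)| := by ring_nf
    _ ≤ M ^ 2 * L + M * L * (2 * M) := by
      refine (abs_add_le _ _).trans (add_le_add (by rwa [abs_neg]) ?_)
      rw [abs_mul]
      exact mul_le_mul hmean hab (abs_nonneg _) ((abs_nonneg _).trans hmean)
    _ = 3 * M ^ 2 * L := by ring

end Misspecification

theorem variance_misspecification_bound_general
    (P Q : Measure ℝ) [IsProbabilityMeasure P] [IsProbabilityMeasure Q]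
    (hac : Q ≪ P)
    (hKL : Integrable (fun x => Real.log ((Q.rnDeriv P x).toReal)) Q)
    (M : ℝ)
    (hP : ∀ᵐ x ∂P, |x| ≤ M) :
    |variance id P - variance id Q| ≤ 8 * M^2 * Real.sqrt (2 * klDiv Q P) := by
  calc |variance id P - variance id Q|
      ≤ 3 * M ^ 2 * ∫ x, |(Q.rnDeriv P x).toReal - 1| ∂P :=
        abs_variance_sub_variance_le hac aestronglyMeasurable_id hP
    _ ≤ 3 * M ^ 2 * √(2 * klDiv Q P) := by
        gcongr
        exact integral_abs_rnDeriv_sub_one_le_sqrt hac hKL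
    _ ≤ 8 * M ^ 2 * √(2 * klDiv Q P) := by gcongr; norm_num

/-- variance misspecification bound for bounded random variables. -/
theorem variance_misspecification_bound
    (P Q : Measure ℝ) [IsProbabilityMeasure P] [IsProbabilityMeasure Q]
    (hac : Q ≪ P)
    (hKL : Integrable (fun x => Real.log ((Q.rnDeriv P x).toReal)) Q)
    (M : ℝ) (hM : 0 < M)
    (hP : ∀ᵐ x ∂P, |x| ≤ M) (hQ : ∀ᵐ x ∂Q, |x| ≤ M) :
    |variance id P - variance id Q| ≤ 8 * M^2 * Real.sqrt (2 * klDiv Q P) :=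
  variance_misspecification_bound_general P Q hac hKL M hP
end

section
/- (Tightness of the GO divergence bound) Assume f is not P-a.s. constant and its centered cumulant generating function H(c) is finite on (0, d₊). If c⁺ ∈ (0, d₊) satisfies R(P^{c⁺}||P) = η², then the measure Q⁺ = P^{c⁺} attains the upper bound: E_{Q⁺}[f] - E_P[f] = inf_{c>0} { (1/c)(H(c) + η²) } = H'(c⁺) = max over all Q with R(Q||P) ≤ η² of E_Q[f] - E_P[f]. -/
open MeasureTheory ProbabilityTheory Real

/-!
Donsker–Varadhan: for every `c` and every `Q ≪ P` of finite divergence,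
`c (E_Q f - E_P f) ≤ H(c) + R(Q‖P)`, since the difference is `R(Q‖P^c) ≥ 0`; for `Q = P^c` it is
an equality, with `E_{P^c} f - E_P f = H'(c)` and `R(P^c‖P) = c H'(c) - H(c)`.
Taking `c = c⁺` bounds `E_Q f - E_P f` by `H'(c⁺)` whenever `R(Q‖P) ≤ η² = R(P^{c⁺}‖P)`;
taking `Q = P^{c⁺}` bounds every `(H(c) + η²)/c` from below by `H'(c⁺)`, with equality at `c⁺`.
-/

lemma MeasureTheory.tilted_add_const {α : Type*} [MeasurableSpace α] (μ : Measure α)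
    (f : α → ℝ) (r : ℝ) : μ.tilted (fun x => f x + r) = μ.tilted f := by
  simp only [Measure.tilted, exp_add, integral_mul_const,
    mul_div_mul_right _ _ (exp_ne_zero r)]

section Tilted

variable {α : Type*} [MeasurableSpace α] {P Q : Measure α} {X : α → ℝ} {t : ℝ}

lemma mul_integral_le_cgf_add_klDiv [IsFiniteMeasure P] [NeZero P] [IsProbabilityMeasure Q]
    (hQP : Q ≪ P) (hXQ : Integrable X Q) (hllr : Integrable (llr Q P) Q)
    (ht : Integrable (fun x => exp (t * X x)) P) :
    t * Q[X] ≤ cgf X P t + klDiv Q P := by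
  have htX : Integrable (fun x => t * X x) Q := hXQ.const_mul t
  have := isProbabilityMeasure_tilted ht
  have hgibbs := InformationTheory.integral_llr_add_sub_measure_univ_nonneg
    (hQP.trans (absolutelyContinuous_tilted ht)) (integrable_llr_tilted_right hQP htX hllr ht)
  rw [integral_llr_tilted_right hQP htX ht hllr, integral_const_mul] at hgibbs
  simp only [probReal_univ] at hgibbs
  rw [cgf, mgf, klDiv_eq_integral_llr]
  linarith

lemma llr_tilted_mul_ae_eq [SigmaFinite P] (ht : Integrable (fun x => exp (t * X x)) P) :
    llr (P.tilted (t * X ·)) P =ᵐ[P.tilted (t * X ·)] fun x => t * X x - cgf X P t :=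
  (tilted_absolutelyContinuous P _).ae_le (log_rnDeriv_tilted_left_self ht)

variable (ht : t ∈ interior (integrableExpSet X P))
include ht

lemma integrable_tilted_mul_self : Integrable X (P.tilted (t * X ·)) :=
  memLp_one_iff_integrable.mp (by exact_mod_cast memLp_tilted_mul ht 1)

lemma integrable_llr_tilted_mul [SigmaFinite P] :
    Integrable (llr (P.tilted (t * X ·)) P) (P.tilted (t * X ·)) :=
  (((integrable_tilted_mul_self ht).const_mul t).sub (integrable_const _)).congr
    (llr_tilted_mul_ae_eq (interior_subset (s := integrableExpSet X P) ht)).symm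

lemma klDiv_tilted_mul [SigmaFinite P] [NeZero P] :
    klDiv (P.tilted (t * X ·)) P = t * deriv (cgf X P) t - cgf X P t := by
  have hexp : Integrable (fun x => exp (t * X x)) P := interior_subset (s := integrableExpSet X P) ht
  have := isProbabilityMeasure_tilted hexp
  rw [klDiv_eq_integral_llr, integral_congr_ae (llr_tilted_mul_ae_eq hexp),
    integral_sub ((integrable_tilted_mul_self ht).const_mul t) (integrable_const _),
    integral_const_mul, integral_tilted_mul_self ht]
  simp

variable [IsProbabilityMeasure P]

lemma isLeast_div_cgf_add_klDiv_tilted (ht0 : 0 < t) :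
    IsLeast {y : ℝ | ∃ c : ℝ, 0 < c ∧ Integrable (fun x => exp (c * X x)) P ∧
      y = (1 / c) * (cgf X P c + klDiv (P.tilted (t * X ·)) P)} (deriv (cgf X P) t) := by
  have hexp : Integrable (fun x => exp (t * X x)) P := interior_subset (s := integrableExpSet X P) ht
  have := isProbabilityMeasure_tilted hexp
  refine ⟨⟨t, ht0, hexp, ?_⟩, ?_⟩
  · rw [klDiv_tilted_mul ht]
    field_simp [ht0.ne']
    ring
  · rintro y ⟨c, hc, hXc, rfl⟩
    have h := mul_integral_le_cgf_add_klDiv (tilted_absolutelyContinuous P _)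
      (integrable_tilted_mul_self ht) (integrable_llr_tilted_mul ht) hXc
    rw [integral_tilted_mul_self ht] at h
    rw [one_div_mul_eq_div, le_div_iff₀ hc]
    linarith

lemma integral_le_deriv_cgf_of_klDiv_le (ht0 : 0 < t) [IsProbabilityMeasure Q] (hQP : Q ≪ P)
    (hXQ : Integrable X Q) (hllr : Integrable (llr Q P) Q)
    (hQ : klDiv Q P ≤ klDiv (P.tilted (t * X ·)) P) :
    Q[X] ≤ deriv (cgf X P) t := by
  have h := mul_integral_le_cgf_add_klDiv hQP hXQ hllr
    (interior_subset (s := integrableExpSet X P) ht)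
  rw [klDiv_tilted_mul ht] at hQ
  exact le_of_mul_le_mul_left (by linarith) ht0

end Tilted

theorem go_divergence_tightness_general
    {α : Type*} [MeasurableSpace α] (P : Measure α) [IsProbabilityMeasure P]
    (f : α → ℝ)
    (d : ℝ)
    (hint : ∀ c ∈ Set.Ioo (0:ℝ) d,
      Integrable (fun x => Real.exp (c * (f x - ∫ y, f y ∂P))) P)
    (H : ℝ → ℝ)
    (hH : ∀ c : ℝ, H c = Real.log (∫ x, Real.exp (c * (f x - ∫ y, f y ∂P)) ∂P))
    (η cplus : ℝ) (hc : cplus ∈ Set.Ioo (0:ℝ) d)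
    (hkl : klDiv (P.tilted fun x => cplus * f x) P = η^2) :
    (∫ x, f x ∂(P.tilted fun x => cplus * f x)) - (∫ y, f y ∂P) =
      sInf {y : ℝ | ∃ c : ℝ, 0 < c ∧
        Integrable (fun x => Real.exp (c * (f x - ∫ z, f z ∂P))) P ∧
        y = (1/c) * (H c + η^2)} ∧
    (∫ x, f x ∂(P.tilted fun x => cplus * f x)) - (∫ y, f y ∂P) = deriv H cplus ∧
    IsGreatest {y : ℝ | ∃ Q : Measure α, IsProbabilityMeasure Q ∧ Q ≪ P ∧
        Integrable f Q ∧
        Integrable (fun x => Real.log ((Q.rnDeriv P x).toReal)) Q ∧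
        klDiv Q P ≤ η^2 ∧ y = (∫ x, f x ∂Q) - ∫ z, f z ∂P}
      ((∫ x, f x ∂(P.tilted fun x => cplus * f x)) - ∫ y, f y ∂P) := by
  set m := ∫ y, f y ∂P
  set X : α → ℝ := fun x => f x - m
  have hcX : cplus ∈ interior (integrableExpSet X P) := interior_maximal hint isOpen_Ioo hc
  have hQ : P.tilted (fun x => cplus * f x) = P.tilted (cplus * X ·) := by
    rw [← tilted_add_const P (cplus * X ·) (cplus * m)]
    simp only [X, mul_sub, sub_add_cancel]
  have hcentred : ∀ Q : Measure α, IsProbabilityMeasure Q → Integrable f Q →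
      (∫ x, f x ∂Q) - m = Q[X] := fun Q _ hfQ => by simp [X, integral_sub hfQ (integrable_const m)]
  have := isProbabilityMeasure_tilted (interior_subset (s := integrableExpSet X P) hcX)
  have hfQ : Integrable f (P.tilted (cplus * X ·)) :=
    ((integrable_tilted_mul_self hcX).add (integrable_const m)).congr
      (ae_of_all _ fun x => sub_add_cancel (f x) m)
  have hmean : (∫ x, f x ∂(P.tilted (cplus * X ·))) - m = deriv (cgf X P) cplus := by
    rw [hcentred _ this hfQ, integral_tilted_mul_self hcX]
  rw [hQ] at hkl ⊢
  rw [show H = cgf X P from funext hH, hmean, ← hkl]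
  refine ⟨(isLeast_div_cgf_add_klDiv_tilted hcX hc.1).csInf_eq.symm, rfl, ?_, ?_⟩
  · exact ⟨_, this, tilted_absolutelyContinuous P _, hfQ, integrable_llr_tilted_mul hcX, le_rfl,
      hmean.symm⟩
  · rintro y ⟨Q, hQprob, hQP, hfQ, hllr, hQkl, rfl⟩
    rw [hcentred Q hQprob hfQ]
    exact integral_le_deriv_cgf_of_klDiv_le hcX hc.1 hQP (hfQ.sub (integrable_const m)) hllr hQkl

/-- tightness of the goal-oriented divergence bound: the tilted
measure Q⁺ = P^{c⁺} with R(P^{c⁺}||P) = η² attains the upper bound. -/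
theorem go_divergence_tightness
    {α : Type*} [MeasurableSpace α] (P : Measure α) [IsProbabilityMeasure P]
    (f : α → ℝ) (hf : Measurable f) (hfP : Integrable f P)
    (hnc : ¬ ∃ r : ℝ, f =ᵐ[P] fun _ => r)
    (d : ℝ) (hd : 0 < d)
    (hint : ∀ c ∈ Set.Ioo (0:ℝ) d,
      Integrable (fun x => Real.exp (c * (f x - ∫ y, f y ∂P))) P)
    (H : ℝ → ℝ)
    (hH : ∀ c : ℝ, H c = Real.log (∫ x, Real.exp (c * (f x - ∫ y, f y ∂P)) ∂P))
    (η cplus : ℝ) (hc : cplus ∈ Set.Ioo (0:ℝ) d)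
    (hkl : klDiv (P.tilted fun x => cplus * f x) P = η^2) :
    (∫ x, f x ∂(P.tilted fun x => cplus * f x)) - (∫ y, f y ∂P) =
      sInf {y : ℝ | ∃ c : ℝ, 0 < c ∧
        Integrable (fun x => Real.exp (c * (f x - ∫ z, f z ∂P))) P ∧
        y = (1/c) * (H c + η^2)} ∧
    (∫ x, f x ∂(P.tilted fun x => cplus * f x)) - (∫ y, f y ∂P) = deriv H cplus ∧
    IsGreatest {y : ℝ | ∃ Q : Measure α, IsProbabilityMeasure Q ∧ Q ≪ P ∧
        Integrable f Q ∧
        Integrable (fun x => Real.log ((Q.rnDeriv P x).toReal)) Q ∧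
        klDiv Q P ≤ η^2 ∧ y = (∫ x, f x ∂Q) - ∫ z, f z ∂P}
      ((∫ x, f x ∂(P.tilted fun x => cplus * f x)) - ∫ y, f y ∂P) :=
  go_divergence_tightness_general P f d hint H hH η cplus hc hkl
end

section
/- (Saturation at the essential supremum) Let f be bounded above P-a.s. with essential supremum f₊, H(c) = log E_P[exp(c(f - E_P f))] finite for all c > 0, and suppose M₊ := lim_{c→∞} (c H'(c) - H(c)) is finite. Then for any η² > M₊, inf_{c>0} { (1/c)(H(c) + η²) } = f₊ - E_P[f], and this equals sup over all Q with R(Q||P) ≤ η² of E_Q[f] - E_P[f]. -/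
/-!
Put `g = f - E_P f` and `a = f₊ - E_P f`. Then `H` is the cumulant generating function of `g`,
convex on `(0, ∞)`, with `H'(c)` the mean of `g` under the exponential tilt `P^c`. Since `g ≤ a`
a.s. while `P(g ≥ b) > 0` for every `b < a`, `H(c)/c → a`, and hence, as `c H'(c) - H(c)`
converges, `H'(c) → a`. By convexity `H(c) ≥ H(c') + (c - c') H'(c')`; letting `c' → ∞` gives
`c a - H(c) ≤ M₊ < η²`, which together with `H(c) ≤ c a` pins the infimum at `a`. The tilts have `R(P^c‖P) = c H'(c) - H(c) → M₊ < η²`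
and `E_{P^c} f - E_P f = H'(c) → a`, so they approach the bound `a` from inside the divergence
ball, while `E_Q f ≤ f₊` for every `Q ≪ P`.
-/

open MeasureTheory ProbabilityTheory Real

open Filter Set Topology

section CGF

variable {Ω : Type*} [MeasurableSpace Ω] {μ : Measure Ω} {X : Ω → ℝ} {a t : ℝ}

lemma Ioi_subset_interior_integrableExpSet
    (hint : ∀ t, 0 < t → Integrable (fun ω ↦ exp (t * X ω)) μ) :
    Ioi 0 ⊆ interior (integrableExpSet X μ) :=
  interior_maximal hint isOpen_Ioi

lemma convexOn_cgf : ConvexOn ℝ (interior (integrableExpSet X μ)) (cgf X μ) := by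
  have hcgf := analyticOnNhd_cgf (X := X) (μ := μ)
  refine convexOn_of_deriv2_nonneg' convex_integrableExpSet.interior
    hcgf.differentiableOn hcgf.deriv.differentiableOn fun t ht ↦ ?_
  rw [← iteratedDeriv_eq_iterate, ← variance_tilted_mul ht]
  exact variance_nonneg _ _

lemma integrable_tilted_mul_self_s19 (ht : t ∈ interior (integrableExpSet X μ)) :
    Integrable X (μ.tilted (t * X ·)) :=
  (memLp_tilted_mul ht 1).integrable le_rfl

variable [IsProbabilityMeasure μ]

lemma cgf_le_mul_of_ae_le (hX : ∀ᵐ ω ∂μ, X ω ≤ a) (ht : 0 ≤ t)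
    (hint : Integrable (fun ω ↦ exp (t * X ω)) μ) : cgf X μ t ≤ t * a := by
  have hmgf : mgf X μ t ≤ mgf (fun _ ↦ a) μ t := mgf_mono_of_nonneg hX ht (by simp)
  calc cgf X μ t ≤ cgf (fun _ ↦ a) μ t := log_le_log (mgf_pos hint) hmgf
    _ = t * a := cgf_const a

lemma mul_add_log_measureReal_ge_le_cgf (b : ℝ) (hb : 0 < μ.real {ω | b ≤ X ω}) (ht : 0 ≤ t)
    (hint : Integrable (fun ω ↦ exp (t * X ω)) μ) :
    t * b + log (μ.real {ω | b ≤ X ω}) ≤ cgf X μ t := by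
  have h := log_le_log hb (measure_ge_le_exp_mul_mgf b ht hint)
  rw [log_mul (exp_pos _).ne' (mgf_pos hint).ne', log_exp] at h
  rw [cgf]
  linarith

lemma measureReal_ge_pos_of_lt (hX : ∀ b, (∀ᵐ ω ∂μ, X ω ≤ b) → a ≤ b) {b : ℝ} (hb : b < a) :
    0 < μ.real {ω | b ≤ X ω} := by
  refine (measureReal_nonneg).lt_of_ne' fun h ↦ hb.not_ge (hX b ?_)
  rw [measureReal_eq_zero_iff, measure_eq_zero_iff_ae_notMem] at h
  filter_upwards [h] with ω hω
  exact (not_le.1 hω).le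

lemma tendsto_cgf_div_atTop (hint : ∀ t, 0 < t → Integrable (fun ω ↦ exp (t * X ω)) μ)
    (hub : ∀ᵐ ω ∂μ, X ω ≤ a) (hlub : ∀ b, (∀ᵐ ω ∂μ, X ω ≤ b) → a ≤ b) :
    Tendsto (fun t ↦ cgf X μ t / t) atTop (𝓝 a) := by
  refine tendsto_order.2 ⟨fun b hb ↦ ?_, fun b hb ↦ ?_⟩
  · obtain ⟨b', hbb', hb'a⟩ := exists_between hb
    have hp := measureReal_ge_pos_of_lt hlub hb'a
    have hlim : Tendsto (fun t ↦ b' + log (μ.real {ω | b' ≤ X ω}) / t) atTop (𝓝 (b' + 0)) :=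
      tendsto_const_nhds.add (tendsto_const_nhds.div_atTop tendsto_id)
    filter_upwards [hlim.eventually_const_lt (by simpa using hbb'),
      eventually_gt_atTop 0] with t hbt ht
    refine hbt.trans_le ?_
    rw [le_div_iff₀ ht, add_mul, div_mul_cancel₀ _ ht.ne', mul_comm]
    exact mul_add_log_measureReal_ge_le_cgf b' hp ht.le (hint t ht)
  · filter_upwards [eventually_gt_atTop 0] with t ht
    rw [div_lt_iff₀ ht, mul_comm]
    exact (cgf_le_mul_of_ae_le hub ht.le (hint t ht)).trans_lt (by nlinarith)

lemma log_rnDeriv_tilted_mul_ae_eq (ht : t ∈ interior (integrableExpSet X μ)) :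
    (fun ω ↦ log ((μ.tilted (t * X ·)).rnDeriv μ ω).toReal)
      =ᵐ[μ.tilted (t * X ·)] fun ω ↦ t * X ω - cgf X μ t :=
  (tilted_absolutelyContinuous μ _).ae_le
    (log_rnDeriv_tilted_left_self (interior_subset (s := integrableExpSet X μ) ht))

lemma integrable_log_rnDeriv_tilted_mul (ht : t ∈ interior (integrableExpSet X μ)) :
    Integrable (fun ω ↦ log ((μ.tilted (t * X ·)).rnDeriv μ ω).toReal) (μ.tilted (t * X ·)) :=
  (((integrable_tilted_mul_self_s19 ht).const_mul t).sub (integrable_const _)).congr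
    (log_rnDeriv_tilted_mul_ae_eq ht).symm

lemma klDiv_tilted_mul_s19 (ht : t ∈ interior (integrableExpSet X μ)) :
    klDiv (μ.tilted (t * X ·)) μ = t * deriv (cgf X μ) t - cgf X μ t := by
  have : IsProbabilityMeasure (μ.tilted (t * X ·)) :=
    isProbabilityMeasure_tilted (interior_subset (s := integrableExpSet X μ) ht)
  rw [klDiv, integral_congr_ae (log_rnDeriv_tilted_mul_ae_eq ht),
    integral_sub ((integrable_tilted_mul_self_s19 ht).const_mul t) (integrable_const _),
    integral_const_mul, integral_tilted_mul_self ht]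
  simp

lemma exists_tilted_integral_sub_eq_deriv_cgf {f : Ω → ℝ} {m : ℝ}
    (ht : t ∈ interior (integrableExpSet (fun ω ↦ f ω - m) μ)) :
    ∃ Q : Measure Ω, IsProbabilityMeasure Q ∧ Q ≪ μ ∧ Integrable f Q ∧
      Integrable (fun ω ↦ log ((Q.rnDeriv μ ω).toReal)) Q ∧
      klDiv Q μ = t * deriv (cgf (fun ω ↦ f ω - m) μ) t - cgf (fun ω ↦ f ω - m) μ t ∧
      ∫ ω, f ω ∂Q - m = deriv (cgf (fun ω ↦ f ω - m) μ) t := by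
  have : IsProbabilityMeasure (μ.tilted fun ω ↦ t * (f ω - m)) :=
    isProbabilityMeasure_tilted (interior_subset (s := integrableExpSet _ μ) ht)
  have hfQ : Integrable f (μ.tilted fun ω ↦ t * (f ω - m)) := by
    refine ((integrable_tilted_mul_self_s19 ht).add (integrable_const m)).congr (ae_of_all _ ?_)
    simp
  refine ⟨_, this, tilted_absolutelyContinuous μ _, hfQ, integrable_log_rnDeriv_tilted_mul ht,
    klDiv_tilted_mul_s19 ht, ?_⟩
  rw [← integral_tilted_mul_self ht, integral_sub hfQ (integrable_const m)]
  simp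

end CGF

section RealFunction

variable {F : ℝ → ℝ} {a M : ℝ}

lemma tendsto_deriv_of_tendsto_div_of_tendsto_mul_deriv_sub
    (hF : Tendsto (fun t ↦ F t / t) atTop (𝓝 a))
    (hM : Tendsto (fun t ↦ t * deriv F t - F t) atTop (𝓝 M)) :
    Tendsto (deriv F) atTop (𝓝 a) := by
  have h := (hM.div_atTop tendsto_id).add hF
  rw [zero_add] at h
  refine h.congr' ?_
  filter_upwards [eventually_gt_atTop 0] with t ht
  simp only [id]
  field_simp
  ring

lemma ConvexOn.mul_sub_le_of_tendsto (hF : ConvexOn ℝ (Ioi 0) F)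
    (hdiff : ∀ t, 0 < t → DifferentiableAt ℝ F t) (hderiv : Tendsto (deriv F) atTop (𝓝 a))
    (hM : Tendsto (fun t ↦ t * deriv F t - F t) atTop (𝓝 M)) {t : ℝ} (ht : 0 < t) :
    t * a - F t ≤ M := by
  have htangent :
      ∀ᶠ t' in atTop, t * a - F t ≤ t * (a - deriv F t') + (t' * deriv F t' - F t') := by
    filter_upwards [eventually_gt_atTop t] with t' htt'
    have hslope := hF.slope_le_deriv ht (ht.trans htt') htt' (hdiff t' (ht.trans htt'))
    rw [slope_def_field, div_le_iff₀ (sub_pos.2 htt')] at hslope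
    nlinarith
  have hlim : Tendsto (fun t' ↦ t * (a - deriv F t') + (t' * deriv F t' - F t')) atTop
      (𝓝 (t * (a - a) + M)) :=
    ((tendsto_const_nhds.sub hderiv).const_mul t).add hM
  simpa using ge_of_tendsto hlim htangent

lemma sInf_inv_mul_add_eq (hle : ∀ t, 0 < t → F t ≤ t * a)
    (hge : ∀ t, 0 < t → t * a ≤ F t + M) :
    sInf {y | ∃ t, 0 < t ∧ y = (1 / t) * (F t + M)} = a := by
  refine IsGLB.csInf_eq ⟨?_, fun b hb ↦ ?_⟩ ⟨_, 1, one_pos, rfl⟩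
  · rintro y ⟨t, ht, rfl⟩
    rw [one_div, le_inv_mul_iff₀ ht]
    exact hge t ht
  · have hlim : Tendsto (fun t ↦ a + M / t) atTop (𝓝 (a + 0)) :=
      tendsto_const_nhds.add (tendsto_const_nhds.div_atTop tendsto_id)
    rw [add_zero] at hlim
    refine ge_of_tendsto hlim ?_
    filter_upwards [eventually_gt_atTop 0] with t ht
    calc b ≤ (1 / t) * (F t + M) := hb ⟨t, ht, rfl⟩
      _ ≤ (1 / t) * (t * a + M) := by gcongr; exact hle t ht
      _ = a + M / t := by field_simp

end RealFunction

theorem go_divergence_saturation_general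
    {α : Type*} [MeasurableSpace α] (P : Measure α) [IsProbabilityMeasure P]
    (f : α → ℝ)
    (fplus : ℝ) (hub : ∀ᵐ x ∂P, f x ≤ fplus)
    (hlub : ∀ b : ℝ, (∀ᵐ x ∂P, f x ≤ b) → fplus ≤ b)
    (H : ℝ → ℝ)
    (hH : ∀ c : ℝ, H c = Real.log (∫ x, Real.exp (c * (f x - ∫ y, f y ∂P)) ∂P))
    (hint : ∀ c : ℝ, 0 < c →
      Integrable (fun x => Real.exp (c * (f x - ∫ y, f y ∂P))) P)
    (Mplus : ℝ)
    (hM : Filter.Tendsto (fun c => c * deriv H c - H c) Filter.atTop (nhds Mplus))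
    (η : ℝ) (hη : Mplus < η^2) :
    sInf {y : ℝ | ∃ c : ℝ, 0 < c ∧ y = (1/c) * (H c + η^2)} =
      fplus - ∫ y, f y ∂P ∧
    IsLUB {y : ℝ | ∃ Q : Measure α, IsProbabilityMeasure Q ∧ Q ≪ P ∧
        Integrable f Q ∧
        Integrable (fun x => Real.log ((Q.rnDeriv P x).toReal)) Q ∧
        klDiv Q P ≤ η^2 ∧ y = (∫ x, f x ∂Q) - ∫ z, f z ∂P}
      (fplus - ∫ y, f y ∂P) := by
  set m := ∫ y, f y ∂P
  have hHcgf : H = cgf (fun x ↦ f x - m) P := funext hH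
  have hIoi : Ioi 0 ⊆ interior (integrableExpSet (fun x ↦ f x - m) P) :=
    Ioi_subset_interior_integrableExpSet hint
  have hub' : ∀ᵐ x ∂P, f x - m ≤ fplus - m := hub.mono fun x hx ↦ by linarith
  have hlub' (b : ℝ) (hb : ∀ᵐ x ∂P, f x - m ≤ b) : fplus - m ≤ b := by
    linarith [hlub (b + m) (hb.mono fun x hx ↦ by linarith)]
  have hdiv : Tendsto (fun c ↦ H c / c) atTop (𝓝 (fplus - m)) :=
    hHcgf ▸ tendsto_cgf_div_atTop hint hub' hlub'
  have hderiv := tendsto_deriv_of_tendsto_div_of_tendsto_mul_deriv_sub hdiv hM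
  have hconv : ConvexOn ℝ (Ioi 0) H := hHcgf ▸ convexOn_cgf.subset hIoi (convex_Ioi 0)
  have hlegendre (c : ℝ) (hc : 0 < c) : c * (fplus - m) - H c ≤ Mplus :=
    hconv.mul_sub_le_of_tendsto
      (fun t ht ↦ hHcgf ▸ (analyticAt_cgf (hIoi ht)).differentiableAt) hderiv hM hc
  refine ⟨sInf_inv_mul_add_eq (fun c hc ↦ hHcgf ▸ cgf_le_mul_of_ae_le hub' hc.le (hint c hc))
    fun c hc ↦ by linarith [hlegendre c hc], ?_, fun b hb ↦ ?_⟩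
  · rintro y ⟨Q, hQ, hQP, hfQ, -, -, rfl⟩
    have := integral_mono_ae hfQ (integrable_const fplus) (hQP.ae_le hub)
    simp only [integral_const, probReal_univ, smul_eq_mul, one_mul] at this
    linarith
  · refine le_of_tendsto hderiv ?_
    filter_upwards [hM.eventually_lt_const hη, eventually_gt_atTop 0] with c hkl hc
    obtain ⟨Q, hQ, hQP, hfQ, hlogQ, hklQ, hmean⟩ :=
      exists_tilted_integral_sub_eq_deriv_cgf (hIoi hc)
    rw [← hHcgf] at hklQ hmean
    exact hb ⟨Q, hQ, hQP, hfQ, hlogQ, hklQ ▸ hkl.le, hmean.symm⟩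

/-- saturation of the goal-oriented divergence bound at the
essential supremum for large KL tolerances. -/
theorem go_divergence_saturation
    {α : Type*} [MeasurableSpace α] (P : Measure α) [IsProbabilityMeasure P]
    (f : α → ℝ) (hf : Measurable f) (hfP : Integrable f P)
    (fplus : ℝ) (hub : ∀ᵐ x ∂P, f x ≤ fplus)
    (hlub : ∀ b : ℝ, (∀ᵐ x ∂P, f x ≤ b) → fplus ≤ b)
    (H : ℝ → ℝ)
    (hH : ∀ c : ℝ, H c = Real.log (∫ x, Real.exp (c * (f x - ∫ y, f y ∂P)) ∂P))
    (hint : ∀ c : ℝ, 0 < c →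
      Integrable (fun x => Real.exp (c * (f x - ∫ y, f y ∂P))) P)
    (Mplus : ℝ)
    (hM : Filter.Tendsto (fun c => c * deriv H c - H c) Filter.atTop (nhds Mplus))
    (η : ℝ) (hη : Mplus < η^2) :
    sInf {y : ℝ | ∃ c : ℝ, 0 < c ∧ y = (1/c) * (H c + η^2)} =
      fplus - ∫ y, f y ∂P ∧
    IsLUB {y : ℝ | ∃ Q : Measure α, IsProbabilityMeasure Q ∧ Q ≪ P ∧
        Integrable f Q ∧
        Integrable (fun x => Real.log ((Q.rnDeriv P x).toReal)) Q ∧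
        klDiv Q P ≤ η^2 ∧ y = (∫ x, f x ∂Q) - ∫ z, f z ∂P}
      (fplus - ∫ y, f y ∂P) :=
  go_divergence_saturation_general P f fplus hub hlub H hH hint Mplus hM η hη
end
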